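/- Let M be the program of Proposition 3 (rules (i)–(viii) with intensional predicates p = (step, next, at)), and let Π be the Lloyd-Topor program consisting of the facts (i), the rule (vi) at(x,y,u) ← move(x,y,z) ∧ next(z,u), the rules at(x,y,0̂) ← object(x) ∧ place(y) ∧ ¬¬at(x,y,0̂) and at(x,y,u) ← at(x,y,z) ∧ next(z,u) ∧ ¬¬at(x,y,u), and the rules object(x) ← ¬¬object(x), place(y) ← ¬¬place(y), move(x,y,z) ← ¬¬move(x,y,z). Then SM_p[M] is logically equivalent to SM[Π] ∧ H, where H is the conjunction of the universal closures of î ≠ ĵ (1 ≤ i < j ≤ k), at(x,y,z) → object(x) ∧ place(y) ∧ step(z), move(x,y,z) → object(x) ∧ place(y) ∧ step(z), at(x,y₁,z) ∧ at(x,y₂,z) → y₁ = y₂, and object(x) ∧ step(z) → ∃y at(x,y,z). -/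

import Mathlib

/- ## First-order logic with named variables -/

namespace LT

/-- A first-order signature: function symbols and predicate symbols with arities. -/
structure Signature where
  Func : Type
  fnArity : Func → ℕ
  Pred : Type
  prArity : Pred → ℕ

/-- First-order terms (variables are natural numbers). -/
inductive Term (σ : Signature) : Type
  | var : ℕ → Term σ
  | func (f : σ.Func) (args : Fin (σ.fnArity f) → Term σ) : Term σ

/-- First-order formulas built from ⊥, atoms, equality, ∧, ∨, →, ∀, ∃. -/
inductive Fml (σ : Signature) : Type
  | falsum : Fml σ
  | atom (p : σ.Pred) (args : Fin (σ.prArity p) → Term σ) : Fml σ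
  | eq (t₁ t₂ : Term σ) : Fml σ
  | and (F G : Fml σ) : Fml σ
  | or (F G : Fml σ) : Fml σ
  | imp (F G : Fml σ) : Fml σ
  | all (n : ℕ) (F : Fml σ) : Fml σ
  | ex (n : ℕ) (F : Fml σ) : Fml σ

variable {σ : Signature}

/-- ¬F is an abbreviation for F → ⊥. -/
def Fml.not (F : Fml σ) : Fml σ := F.imp .falsum

/-- ⊤ stands for ⊥ → ⊥. -/
def Fml.verum : Fml σ := Fml.not .falsum

/-- F ↔ G stands for (F → G) ∧ (G → F). -/
def Fml.iff (F G : Fml σ) : Fml σ := (F.imp G).and (G.imp F)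

/-- A ground atom over a universe `U`: a predicate symbol with a tuple of
universe elements as arguments. -/
abbrev GAtom (σ : Signature) (U : Type) := Σ p : σ.Pred, Fin (σ.prArity p) → U

/-- A first-order interpretation. -/
structure Interp (σ : Signature) where
  U : Type
  nonempty : Nonempty U
  fn (f : σ.Func) : (Fin (σ.fnArity f) → U) → U
  rel : GAtom σ U → Prop

/-- Value of a term under an interpretation and an assignment of variables. -/
def Term.eval (I : Interp σ) (v : ℕ → I.U) : Term σ → I.U
  | .var n => v n
  | .func f ts => I.fn f fun i => (ts i).eval I v

/-- Tarskian satisfaction. -/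
def Fml.Sat (I : Interp σ) (v : ℕ → I.U) : Fml σ → Prop
  | .falsum => False
  | .atom p ts => I.rel ⟨p, fun i => (ts i).eval I v⟩
  | .eq t₁ t₂ => t₁.eval I v = t₂.eval I v
  | .and F G => F.Sat I v ∧ G.Sat I v
  | .or F G => F.Sat I v ∨ G.Sat I v
  | .imp F G => F.Sat I v → G.Sat I v
  | .all n F => ∀ d : I.U, F.Sat I (Function.update v n d)
  | .ex n F => ∃ d : I.U, F.Sat I (Function.update v n d)

/-- `I` satisfies (the universal closure of) every formula in `Γ`. -/
def Interp.satAll (I : Interp σ) (Γ : Set (Fml σ)) : Prop :=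
  ∀ F ∈ Γ, ∀ v : ℕ → I.U, F.Sat I v

/-- The predicate symbols occurring in a formula. -/
def Fml.hasPred : Fml σ → σ.Pred → Prop
  | .falsum, _ => False
  | .atom p _, q => p = q
  | .eq _ _, _ => False
  | .and F G, q => F.hasPred q ∨ G.hasPred q
  | .or F G, q => F.hasPred q ∨ G.hasPred q
  | .imp F G, q => F.hasPred q ∨ G.hasPred q
  | .all _ F, q => F.hasPred q
  | .ex _ F, q => F.hasPred q

/- ## Lloyd-Topor programs, completion -/

/-- A Lloyd-Topor rule  p(t) ← G. -/
structure Rule (σ : Signature) where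
  head : σ.Pred
  args : Fin (σ.prArity head) → Term σ
  body : Fml σ

/-- The rule p(t) ← G read as the formula G → p(t)
(its universal closure is implicit in satisfaction). -/
def Rule.fml (R : Rule σ) : Fml σ := R.body.imp (.atom R.head R.args)

/-- The ground atom obtained by evaluating the head of a rule. -/
def Rule.headEval (R : Rule σ) (I : Interp σ) (v : ℕ → I.U) : GAtom σ I.U :=
  ⟨R.head, fun i => (R.args i).eval I v⟩

/-- The predicate constants occurring in a program. -/
def progPreds (Pr : List (Rule σ)) : Set σ.Pred :=
  {p | ∃ R ∈ Pr, R.fml.hasPred p}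

/-- `I` satisfies the program `Pr`, i.e. the conjunction of the universal
closures of G → p(t) over all rules p(t) ← G of Pr. -/
def Interp.satProg (I : Interp σ) (Pr : List (Rule σ)) : Prop :=
  ∀ R ∈ Pr, ∀ v : ℕ → I.U, R.fml.Sat I v

/-- `I` satisfies Comp[Pr], the conjunction of the completed definitions
∀x(p(x) ↔ ⋁ᵢ ∃yⁱ (x = tⁱ ∧ Gⁱ)) of all predicate constants p of Pr. -/
def Interp.satComp (I : Interp σ) (Pr : List (Rule σ)) : Prop :=
  ∀ A : GAtom σ I.U, A.1 ∈ progPreds Pr →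
    (I.rel A ↔ ∃ R ∈ Pr, ∃ v : ℕ → I.U, R.headEval I v = A ∧ R.body.Sat I v)

/- ## The operator SM -/

/-- Satisfaction of the Ferraris–Lee–Lifschitz transform F*(u), where `u`
reinterprets the intensional predicates `ints`. -/
def Fml.SatStar (I : Interp σ) (ints : Set σ.Pred) (u : GAtom σ I.U → Prop)
    (v : ℕ → I.U) : Fml σ → Prop
  | .falsum => False
  | .atom p ts =>
      (p ∈ ints ∧ u ⟨p, fun i => (ts i).eval I v⟩) ∨
      (p ∉ ints ∧ I.rel ⟨p, fun i => (ts i).eval I v⟩)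
  | .eq t₁ t₂ => t₁.eval I v = t₂.eval I v
  | .and F G => F.SatStar I ints u v ∧ G.SatStar I ints u v
  | .or F G => F.SatStar I ints u v ∨ G.SatStar I ints u v
  | .imp F G => (F.SatStar I ints u v → G.SatStar I ints u v) ∧ (F.Sat I v → G.Sat I v)
  | .all n F => ∀ d : I.U, F.SatStar I ints u (Function.update v n d)
  | .ex n F => ∃ d : I.U, F.SatStar I ints u (Function.update v n d)

/-- u < p : on the intensional predicates, `u` is contained in the relations of
`I` and is not equal to them. -/
def predLt (I : Interp σ) (ints : Set σ.Pred) (u : GAtom σ I.U → Prop) : Prop :=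
  (∀ A : GAtom σ I.U, A.1 ∈ ints → u A → I.rel A) ∧
  ¬ (∀ A : GAtom σ I.U, A.1 ∈ ints → (u A ↔ I.rel A))

/-- `I` satisfies SM[Pr] (with intensional predicates `ints`), for a
Lloyd-Topor program Pr. -/
def Interp.satSM (I : Interp σ) (ints : Set σ.Pred) (Pr : List (Rule σ)) : Prop :=
  I.satProg Pr ∧
  ¬ ∃ u : GAtom σ I.U → Prop, predLt I ints u ∧
      ∀ R ∈ Pr, ∀ v : ℕ → I.U, R.fml.SatStar I ints u v

/-- The predicate symbols occurring in a set of sentences. -/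
def fmlSetPreds (Fs : Set (Fml σ)) : Set σ.Pred := {p | ∃ F ∈ Fs, F.hasPred p}

/-- `I` satisfies SM[F] (with intensional predicates `ints`) where `F` is the
conjunction of the universal closures of the members of `Fs`. -/
def Interp.satSMSet (I : Interp σ) (ints : Set σ.Pred) (Fs : Set (Fml σ)) : Prop :=
  I.satAll Fs ∧
  ¬ ∃ u : GAtom σ I.U → Prop, predLt I ints u ∧
      ∀ F ∈ Fs, ∀ v : ℕ → I.U, F.SatStar I ints u v

/- ## Predicate dependency graph and tightness -/

mutual
  /-- Predicates with a positive nonnegated occurrence. -/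
  def Fml.pnn : Fml σ → Set σ.Pred
    | .falsum => ∅
    | .atom p _ => {p}
    | .eq _ _ => ∅
    | .and F G => F.pnn ∪ G.pnn
    | .or F G => F.pnn ∪ G.pnn
    | .imp _ .falsum => ∅
    | .imp F G => F.nnn ∪ G.pnn
    | .all _ F => F.pnn
    | .ex _ F => F.pnn
  /-- Predicates with a negative nonnegated occurrence. -/
  def Fml.nnn : Fml σ → Set σ.Pred
    | .falsum => ∅
    | .atom _ _ => ∅
    | .eq _ _ => ∅
    | .and F G => F.nnn ∪ G.nnn
    | .or F G => F.nnn ∪ G.nnn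
    | .imp _ .falsum => ∅
    | .imp F G => F.pnn ∪ G.nnn
    | .all _ F => F.nnn
    | .ex _ F => F.nnn
end

/-- Edge of the predicate dependency graph of Pr. -/
def depEdge (Pr : List (Rule σ)) (p q : σ.Pred) : Prop :=
  ∃ R ∈ Pr, R.head = p ∧ q ∈ R.body.pnn

/-- Pr is tight: its predicate dependency graph is acyclic. -/
def Tight (Pr : List (Rule σ)) : Prop :=
  ∀ p : σ.Pred, ¬ Relation.TransGen (depEdge Pr) p p

/- ## Rule dependency graph, chains -/

/-- Renaming of variables in a term. -/
def Term.rename (ρ : ℕ → ℕ) : Term σ → Term σ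
  | .var n => .var (ρ n)
  | .func f ts => .func f fun i => (ts i).rename ρ

/-- Renaming of variables (free and bound) in a formula. -/
def Fml.rename (ρ : ℕ → ℕ) : Fml σ → Fml σ
  | .falsum => .falsum
  | .atom p ts => .atom p fun i => (ts i).rename ρ
  | .eq t₁ t₂ => .eq (t₁.rename ρ) (t₂.rename ρ)
  | .and F G => .and (F.rename ρ) (G.rename ρ)
  | .or F G => .or (F.rename ρ) (G.rename ρ)
  | .imp F G => .imp (F.rename ρ) (G.rename ρ)
  | .all n F => .all (ρ n) (F.rename ρ)
  | .ex n F => .ex (ρ n) (F.rename ρ)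

/-- Renaming of variables in a rule. -/
def Rule.rename (ρ : ℕ → ℕ) (R : Rule σ) : Rule σ :=
  ⟨R.head, fun i => (R.args i).rename ρ, R.body.rename ρ⟩

/-- Vertices of the rule dependency graph of Pr: rules of Pr with variables
(both free and bound) renamed arbitrarily. -/
def isVariant (Pr : List (Rule σ)) (R' : Rule σ) : Prop :=
  ∃ R ∈ Pr, ∃ ρ : ℕ → ℕ, Function.Injective ρ ∧ R' = R.rename ρ

/-- A (syntactic) atomic formula p(s). -/
abbrev TAtom (σ : Signature) := Σ p : σ.Pred, Fin (σ.prArity p) → Term σ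

mutual
  /-- Atomic formulas with a positive nonnegated occurrence. -/
  def Fml.pnnAtoms : Fml σ → Set (TAtom σ)
    | .falsum => ∅
    | .atom p ts => {⟨p, ts⟩}
    | .eq _ _ => ∅
    | .and F G => F.pnnAtoms ∪ G.pnnAtoms
    | .or F G => F.pnnAtoms ∪ G.pnnAtoms
    | .imp _ .falsum => ∅
    | .imp F G => F.nnnAtoms ∪ G.pnnAtoms
    | .all _ F => F.pnnAtoms
    | .ex _ F => F.pnnAtoms
  /-- Atomic formulas with a negative nonnegated occurrence. -/
  def Fml.nnnAtoms : Fml σ → Set (TAtom σ)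
    | .falsum => ∅
    | .atom _ _ => ∅
    | .eq _ _ => ∅
    | .and F G => F.nnnAtoms ∪ G.nnnAtoms
    | .or F G => F.nnnAtoms ∪ G.nnnAtoms
    | .imp _ .falsum => ∅
    | .imp F G => F.pnnAtoms ∪ G.nnnAtoms
    | .all _ F => F.nnnAtoms
    | .ex _ F => F.nnnAtoms
end

/-- Candidate path of length `n` in the rule dependency graph: rules
R₀,...,Rₙ and edge labels A₁,...,Aₙ. -/
structure RdgPath (σ : Signature) (n : ℕ) where
  rules : Fin (n + 1) → Rule σ
  labels : Fin n → TAtom σ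

/-- `C` is a path of length `n` in the rule dependency graph of Pr: all of its
rules are variants of rules of Pr, and for each i the labelled atom p'(s) has a
positive nonnegated occurrence in the body of the source rule and p' is the
head predicate of the target rule. -/
def RdgPath.valid {n : ℕ} (C : RdgPath σ n) (Pr : List (Rule σ)) : Prop :=
  (∀ i, isVariant Pr (C.rules i)) ∧
  ∀ i : Fin n,
    C.labels i ∈ (C.rules i.castSucc).body.pnnAtoms ∧
    (C.rules i.succ).head = (C.labels i).1

/-- Variables (free and bound) of a term. -/
def Term.vars : Term σ → Set ℕ
  | .var n => {n}
  | .func _ ts => ⋃ i, (ts i).vars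

/-- Variables (free and bound) of a formula. -/
def Fml.vars : Fml σ → Set ℕ
  | .falsum => ∅
  | .atom _ ts => ⋃ i, (ts i).vars
  | .eq t₁ t₂ => t₁.vars ∪ t₂.vars
  | .and F G => F.vars ∪ G.vars
  | .or F G => F.vars ∪ G.vars
  | .imp F G => F.vars ∪ G.vars
  | .all n F => insert n F.vars
  | .ex n F => insert n F.vars

/-- Variables (free and bound) of a rule. -/
def Rule.vars (R : Rule σ) : Set ℕ := (⋃ i, (R.args i).vars) ∪ R.body.vars

/-- A chain: a path in the rule dependency graph whose rules pairwise have no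
common variables. -/
def RdgPath.isChain {n : ℕ} (C : RdgPath σ n) (Pr : List (Rule σ)) : Prop :=
  C.valid Pr ∧ ∀ i j, i ≠ j → Disjoint (C.rules i).vars (C.rules j).vars

/-- Satisfaction of the chain formula
F_C = ⋀_{i=1}^n (sⁱ = tⁱ) ∧ ⋀_{i=0}^n Bodyᵢ. -/
def RdgPath.satChainFml {n : ℕ} (C : RdgPath σ n) (I : Interp σ) (v : ℕ → I.U) : Prop :=
  (∀ i : Fin n,
    (⟨(C.labels i).1, fun j => ((C.labels i).2 j).eval I v⟩ : GAtom σ I.U) =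
      (C.rules i.succ).headEval I v) ∧
  ∀ i : Fin (n + 1), (C.rules i).body.Sat I v

/-- Pr is Γ-tight: for some positive n, for every chain C of length n,
Γ together with Comp[Pr] entails the universal closure of ¬F_C. -/
def GammaTight (Γ : Set (Fml σ)) (Pr : List (Rule σ)) : Prop :=
  ∃ n : ℕ, 0 < n ∧ ∀ C : RdgPath σ n, C.isChain Pr →
    ∀ I : Interp σ, I.satAll Γ → I.satComp Pr → ∀ v : ℕ → I.U, ¬ C.satChainFml I v

/- ## Infinitary propositional formulas -/

/-- Infinitary propositional formulas over a set `α` of atoms, with arbitrary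
(indexed) conjunctions and disjunctions. -/
inductive IFml (α : Type) : Type 1
  | atom : α → IFml α
  | falsum : IFml α
  | conj {ι : Type} (f : ι → IFml α) : IFml α
  | disj {ι : Type} (f : ι → IFml α) : IFml α
  | imp (F G : IFml α) : IFml α

variable {α : Type}

/-- Satisfaction of an infinitary formula by a propositional interpretation
(a set of atoms). -/
def IFml.ISat (J : Set α) : IFml α → Prop
  | .atom a => a ∈ J
  | .falsum => False
  | .conj f => ∀ i, (f i).ISat J
  | .disj f => ∃ i, (f i).ISat J
  | .imp F G => F.ISat J → G.ISat J

attribute [local instance] Classical.propDecidable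

/-- The reduct F^J of an infinitary formula. -/
noncomputable def IFml.reduct (J : Set α) : IFml α → IFml α
  | .atom a => if a ∈ J then .atom a else .falsum
  | .falsum => .falsum
  | .conj f => if (IFml.conj f).ISat J then .conj (fun i => (f i).reduct J) else .falsum
  | .disj f => if (IFml.disj f).ISat J then .disj (fun i => (f i).reduct J) else .falsum
  | .imp F G => if (IFml.imp F G).ISat J then .imp (F.reduct J) (G.reduct J) else .falsum

/-- `J` is a stable model of `F`: `J` is a minimal model of the reduct F^J. -/
def IFml.isStableModel (J : Set α) (F : IFml α) : Prop :=
  (F.reduct J).ISat J ∧ ∀ K : Set α, K ⊆ J → (F.reduct J).ISat K → K = J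

/-- An infinitary program: an (indexed) collection of rules A ← G with
A an atom and G an infinitary formula. -/
structure IProg (α : Type) where
  idx : Type
  head : idx → α
  body : idx → IFml α

/-- The infinitary program as an infinitary formula: the conjunction of the
implications G → A over all its rules A ← G. -/
def IProg.fml (P : IProg α) : IFml α := .conj fun i => (P.body i).imp (.atom (P.head i))

/-- `J` is supported by `P`: every atom of `J` is the head of a rule whose
body is satisfied by `J`. -/
def IProg.supported (P : IProg α) (J : Set α) : Prop :=
  ∀ a ∈ J, ∃ i, P.head i = a ∧ (P.body i).ISat J

mutual
  /-- Positive nonnegated atoms of an infinitary formula. -/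
  def IFml.Pnn : IFml α → Set α
    | .atom a => {a}
    | .falsum => ∅
    | .conj f => ⋃ i, (f i).Pnn
    | .disj f => ⋃ i, (f i).Pnn
    | .imp _ .falsum => ∅
    | .imp F G => F.Nnn ∪ G.Pnn
  /-- Negative nonnegated atoms of an infinitary formula. -/
  def IFml.Nnn : IFml α → Set α
    | .atom _ => ∅
    | .falsum => ∅
    | .conj f => ⋃ i, (f i).Nnn
    | .disj f => ⋃ i, (f i).Nnn
    | .imp _ .falsum => ∅
    | .imp F G => F.Pnn ∪ G.Nnn
end

/-- `a'` is a parent of `a` relative to `P` and `J`. -/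
def IProg.parent (P : IProg α) (J : Set α) (a' a : α) : Prop :=
  a ∈ J ∧ a' ∈ J ∧ ∃ i, P.head i = a ∧ (P.body i).ISat J ∧ a' ∈ (P.body i).Pnn

/-- `P` is tight on `J`: there is no infinite sequence A₀, A₁, ... of elements
of `J` in which each A_{i+1} is a parent of A_i. -/
def IProg.tightOn (P : IProg α) (J : Set α) : Prop :=
  ¬ ∃ A : ℕ → α, (∀ n, A n ∈ J) ∧ ∀ n, P.parent J (A (n + 1)) (A n)

/- ## Grounding -/

/-- The grounding gr_I(F) of a first-order formula relative to an
interpretation `I` (and an assignment `v` for the free variables). -/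
noncomputable def Fml.ground (I : Interp σ) (v : ℕ → I.U) : Fml σ → IFml (GAtom σ I.U)
  | .falsum => .falsum
  | .atom p ts => .atom ⟨p, fun i => (ts i).eval I v⟩
  | .eq t₁ t₂ => if t₁.eval I v = t₂.eval I v then .imp .falsum .falsum else .falsum
  | .and F G => .conj fun b : Bool => cond b (F.ground I v) (G.ground I v)
  | .or F G => .disj fun b : Bool => cond b (F.ground I v) (G.ground I v)
  | .imp F G => .imp (F.ground I v) (G.ground I v)
  | .all n F => .conj fun d : I.U => F.ground I (Function.update v n d)
  | .ex n F => .disj fun d : I.U => F.ground I (Function.update v n d)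

/-- I^r : the set of ground atoms satisfied by `I`. -/
def Interp.ir (I : Interp σ) : Set (GAtom σ I.U) := {A | I.rel A}

/-- The infinitary program gr_I(Pr) obtained by grounding a Lloyd-Topor
program: one ground rule for every rule of Pr and every assignment. -/
noncomputable def groundProg (I : Interp σ) (Pr : List (Rule σ)) : IProg (GAtom σ I.U) where
  idx := {R : Rule σ // R ∈ Pr} × (ℕ → I.U)
  head := fun x => (x.1.1).headEval I x.2
  body := fun x => (x.1.1).body.ground I x.2

/-- Free variables of a formula. -/
def Fml.freeVars : Fml σ → Set ℕ
  | .falsum => ∅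
  | .atom _ ts => ⋃ i, (ts i).vars
  | .eq t₁ t₂ => t₁.vars ∪ t₂.vars
  | .and F G => F.freeVars ∪ G.freeVars
  | .or F G => F.freeVars ∪ G.freeVars
  | .imp F G => F.freeVars ∪ G.freeVars
  | .all n F => F.freeVars \ {n}
  | .ex n F => F.freeVars \ {n}

/- ## The moving-objects signature and programs -/

inductive MP : Type
  | object | place | step | next | at' | move

def mar : MP → ℕ
  | .object => 1
  | .place => 1
  | .step => 1
  | .next => 2
  | .at' => 3
  | .move => 3

/-- The signature with object constants 0̂, ..., k̂ and the predicates
object, place, step, next, at, move. -/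
def msig (k : ℕ) : Signature := ⟨Fin (k + 1), fun _ => 0, MP, mar⟩

/-- The object constant î. -/
def con {k : ℕ} (i : Fin (k + 1)) : Term (msig k) := .func i (fun j => j.elim0)

def vx {k : ℕ} : Term (msig k) := .var 0
def vy {k : ℕ} : Term (msig k) := .var 1
def vz {k : ℕ} : Term (msig k) := .var 2
def vu {k : ℕ} : Term (msig k) := .var 3
def vw {k : ℕ} : Term (msig k) := .var 4
def vy1 {k : ℕ} : Term (msig k) := .var 5
def vy2 {k : ℕ} : Term (msig k) := .var 6

/-- The set H of assumptions: unique names (1 ≤ i < j ≤ k), argument typing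
for at and move, uniqueness and existence of location. -/
def Hset (k : ℕ) : Set (Fml (msig k)) :=
  {F | ∃ i j : Fin (k + 1), 1 ≤ (i : ℕ) ∧ (i : ℕ) < (j : ℕ) ∧
        F = Fml.not (.eq (con i) (con j))} ∪
  { (Fml.atom MP.at' ![vx, vy, vz]).imp
      (((Fml.atom MP.object ![vx]).and (Fml.atom MP.place ![vy])).and (Fml.atom MP.step ![vz])),
    (Fml.atom MP.move ![vx, vy, vz]).imp
      (((Fml.atom MP.object ![vx]).and (Fml.atom MP.place ![vy])).and (Fml.atom MP.step ![vz])),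
    ((Fml.atom MP.at' ![vx, vy1, vz]).and (Fml.atom MP.at' ![vx, vy2, vz])).imp (.eq vy1 vy2),
    ((Fml.atom MP.object ![vx]).and (Fml.atom MP.step ![vz])).imp
      (Fml.ex 1 (Fml.atom MP.at' ![vx, vy, vz])) }

/-- The fact step(î). -/
def stepFact {k : ℕ} (i : Fin (k + 1)) : Rule (msig k) := ⟨MP.step, ![con i], Fml.verum⟩
/-- The fact next(î, i+1̂). -/
def nextFact {k : ℕ} (i : Fin k) : Rule (msig k) :=
  ⟨MP.next, ![con i.castSucc, con i.succ], Fml.verum⟩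
/-- (vi)  at(x,y,u) ← move(x,y,z) ∧ next(z,u). -/
def ruleVI {k : ℕ} : Rule (msig k) :=
  ⟨MP.at', ![vx, vy, vu], (Fml.atom MP.move ![vx, vy, vz]).and (Fml.atom MP.next ![vz, vu])⟩
/-- (vii')  at(x,y,0̂) ← object(x) ∧ place(y) ∧ ¬¬at(x,y,0̂). -/
def ruleVII' {k : ℕ} : Rule (msig k) :=
  ⟨MP.at', ![vx, vy, con 0],
    ((Fml.atom MP.object ![vx]).and (Fml.atom MP.place ![vy])).and
      (Fml.not (Fml.not (Fml.atom MP.at' ![vx, vy, con 0])))⟩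
/-- (viii')  at(x,y,u) ← at(x,y,z) ∧ next(z,u) ∧ ¬¬at(x,y,u). -/
def ruleVIII' {k : ℕ} : Rule (msig k) :=
  ⟨MP.at', ![vx, vy, vu],
    ((Fml.atom MP.at' ![vx, vy, vz]).and (Fml.atom MP.next ![vz, vu])).and
      (Fml.not (Fml.not (Fml.atom MP.at' ![vx, vy, vu])))⟩
/-- object(x) ← ¬¬object(x). -/
def choiceO {k : ℕ} : Rule (msig k) :=
  ⟨MP.object, ![vx], Fml.not (Fml.not (Fml.atom MP.object ![vx]))⟩
/-- place(y) ← ¬¬place(y). -/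
def choicePl {k : ℕ} : Rule (msig k) :=
  ⟨MP.place, ![vy], Fml.not (Fml.not (Fml.atom MP.place ![vy]))⟩
/-- move(x,y,z) ← ¬¬move(x,y,z). -/
def choiceMv {k : ℕ} : Rule (msig k) :=
  ⟨MP.move, ![vx, vy, vz], Fml.not (Fml.not (Fml.atom MP.move ![vx, vy, vz]))⟩

/-- The Lloyd-Topor program Pi. -/
def progPi (k : ℕ) : List (Rule (msig k)) :=
  ((List.finRange (k + 1)).map stepFact) ++ ((List.finRange k).map nextFact) ++
    [ruleVI, ruleVII', ruleVIII', choiceO, choicePl, choiceMv]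

/- The program M, as a set of sentences. -/

/-- (i): the facts. -/
def sentI (k : ℕ) : Set (Fml (msig k)) :=
  {F | ∃ i : Fin (k + 1), F = Fml.atom MP.step ![con i]} ∪
  {F | ∃ i : Fin k, F = Fml.atom MP.next ![con i.castSucc, con i.succ]}
/-- (ii): the unique name constraints (1 ≤ i < j ≤ k). -/
def sentII (k : ℕ) : Set (Fml (msig k)) :=
  {F | ∃ i j : Fin (k + 1), 1 ≤ (i : ℕ) ∧ (i : ℕ) < (j : ℕ) ∧
        F = Fml.not (.eq (con i) (con j))}
def typBody {k : ℕ} : Fml (msig k) :=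
  ((Fml.atom MP.object ![vx]).and (Fml.atom MP.place ![vy])).and (Fml.atom MP.step ![vz])
/-- (iii): ← at(x,y,z) ∧ ¬(object(x) ∧ place(y) ∧ step(z)). -/
def cIIIa {k : ℕ} : Fml (msig k) :=
  Fml.not ((Fml.atom MP.at' ![vx, vy, vz]).and (Fml.not typBody))
/-- (iii): ← move(x,y,z) ∧ ¬(object(x) ∧ place(y) ∧ step(z)). -/
def cIIIb {k : ℕ} : Fml (msig k) :=
  Fml.not ((Fml.atom MP.move ![vx, vy, vz]).and (Fml.not typBody))
/-- (iv): ← at(x,y₁,z) ∧ at(x,y₂,z) ∧ y₁ ≠ y₂. -/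
def cIV {k : ℕ} : Fml (msig k) :=
  Fml.not (((Fml.atom MP.at' ![vx, vy1, vz]).and (Fml.atom MP.at' ![vx, vy2, vz])).and
    (Fml.not (.eq vy1 vy2)))
/-- (v): ← object(x) ∧ step(z) ∧ ¬∃y at(x,y,z). -/
def cV {k : ℕ} : Fml (msig k) :=
  Fml.not (((Fml.atom MP.object ![vx]).and (Fml.atom MP.step ![vz])).and
    (Fml.not (Fml.ex 1 (Fml.atom MP.at' ![vx, vy, vz]))))
/-- (vi) as a sentence. -/
def rVIfml {k : ℕ} : Fml (msig k) :=
  ((Fml.atom MP.move ![vx, vy, vz]).and (Fml.atom MP.next ![vz, vu])).imp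
    (Fml.atom MP.at' ![vx, vy, vu])
/-- (vii): {at(x,y,0̂)} ← object(x) ∧ place(y). -/
def chVII {k : ℕ} : Fml (msig k) :=
  ((Fml.atom MP.object ![vx]).and (Fml.atom MP.place ![vy])).imp
    ((Fml.atom MP.at' ![vx, vy, con 0]).or (Fml.not (Fml.atom MP.at' ![vx, vy, con 0])))
/-- (viii): {at(x,y,u)} ← at(x,y,z) ∧ next(z,u). -/
def chVIII {k : ℕ} : Fml (msig k) :=
  ((Fml.atom MP.at' ![vx, vy, vz]).and (Fml.atom MP.next ![vz, vu])).imp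
    ((Fml.atom MP.at' ![vx, vy, vu]).or (Fml.not (Fml.atom MP.at' ![vx, vy, vu])))

/-- The program M. -/
def progM (k : ℕ) : Set (Fml (msig k)) :=
  sentI k ∪ sentII k ∪ {cIIIa, cIIIb, cIV, cV, rVIfml, chVII, chVIII}

/-- The intensional predicates (step, next, at). -/
def intsM : Set MP := {MP.step, MP.next, MP.at'}

/-- Disjunction of a finite list of formulas. -/
def bigOr {σ : Signature} (l : List (Fml σ)) : Fml σ := l.foldr Fml.or Fml.falsum

/-- step(z) ↔ ⋁_{i=0}^{k} z = î. -/
def f3step (k : ℕ) : Fml (msig k) :=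
  (Fml.atom MP.step ![vz]).iff (bigOr ((List.finRange (k + 1)).map fun i => Fml.eq vz (con i)))
/-- next(z,u) ↔ ⋁_{i=0}^{k-1} (z = î ∧ u = i+1̂). -/
def f3next (k : ℕ) : Fml (msig k) :=
  (Fml.atom MP.next ![vz, vu]).iff
    (bigOr ((List.finRange k).map fun i =>
      (Fml.eq vz (con i.castSucc)).and (Fml.eq vu (con i.succ))))
/-- at(x,y,i+1̂) ↔ (move(x,y,î) ∨ (at(x,y,î) ∧ ¬∃w move(x,w,î))). -/
def f3at (k : ℕ) (i : Fin k) : Fml (msig k) :=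
  (Fml.atom MP.at' ![vx, vy, con i.succ]).iff
    ((Fml.atom MP.move ![vx, vy, con i.castSucc]).or
      ((Fml.atom MP.at' ![vx, vy, con i.castSucc]).and
        (Fml.not (Fml.ex 4 (Fml.atom MP.move ![vx, vw, con i.castSucc])))))

section Aux
variable {σ : Signature}

lemma star_imp_sat (I : Interp σ) (ints : Set σ.Pred) (u : GAtom σ I.U → Prop)
    (hle : ∀ A, A.1 ∈ ints → u A → I.rel A) :
    ∀ (F : Fml σ) (v : ℕ → I.U), F.SatStar I ints u v → F.Sat I v := by
  intro F
  induction F with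
  | falsum => intro v h; exact h
  | atom p ts =>
      intro v h
      rcases h with ⟨hm, hu⟩ | ⟨_, hr⟩
      · exact hle _ hm hu
      · exact hr
  | eq t₁ t₂ => intro v h; exact h
  | and F G ihF ihG => intro v h; exact ⟨ihF _ h.1, ihG _ h.2⟩
  | or F G ihF ihG =>
      intro v h
      rcases h with h | h
      · exact Or.inl (ihF _ h)
      · exact Or.inr (ihG _ h)
  | imp F G _ _ => intro v h; exact h.2
  | all n F ih => intro v h d; exact ih _ (h d)
  | ex n F ih => intro v h; obtain ⟨d, h⟩ := h; exact ⟨d, ih _ h⟩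

end Aux

lemma mem_progPi_stepFact {k : ℕ} (i : Fin (k+1)) : stepFact i ∈ progPi k := by
  simp [progPi]

lemma mem_progPi_nextFact {k : ℕ} (i : Fin k) : nextFact i ∈ progPi k := by
  simp [progPi]

lemma mem_progPi_ruleVI {k : ℕ} : (ruleVI : Rule (msig k)) ∈ progPi k := by simp [progPi]
lemma mem_progPi_ruleVII' {k : ℕ} : (ruleVII' : Rule (msig k)) ∈ progPi k := by simp [progPi]
lemma mem_progPi_ruleVIII' {k : ℕ} : (ruleVIII' : Rule (msig k)) ∈ progPi k := by simp [progPi]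
lemma mem_progPi_choiceO {k : ℕ} : (choiceO : Rule (msig k)) ∈ progPi k := by simp [progPi]
lemma mem_progPi_choicePl {k : ℕ} : (choicePl : Rule (msig k)) ∈ progPi k := by simp [progPi]
lemma mem_progPi_choiceMv {k : ℕ} : (choiceMv : Rule (msig k)) ∈ progPi k := by simp [progPi]

lemma pp_mem {k : ℕ} (p : MP) :
    @Membership.mem ((msig k).Pred) (Set ((msig k).Pred)) (Set.instMembership) (progPreds (progPi k)) p := by
  cases p with
  | object => exact ⟨choiceO, mem_progPi_choiceO, by simp [Rule.fml, choiceO, Fml.hasPred]; exact Or.inr rfl⟩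
  | place => exact ⟨choicePl, mem_progPi_choicePl, by simp [Rule.fml, choicePl, Fml.hasPred]; exact Or.inr rfl⟩
  | step => exact ⟨stepFact 0, mem_progPi_stepFact 0, by simp [Rule.fml, stepFact, Fml.hasPred]; exact Or.inr rfl⟩
  | next => exact ⟨ruleVI, mem_progPi_ruleVI, by simp [Rule.fml, ruleVI, Fml.hasPred]; rfl⟩
  | at' => exact ⟨ruleVI, mem_progPi_ruleVI, by simp [Rule.fml, ruleVI, Fml.hasPred]; rfl⟩
  | move => exact ⟨choiceMv, mem_progPi_choiceMv, by simp [Rule.fml, choiceMv, Fml.hasPred]; exact Or.inr rfl⟩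
lemma mem_intsM_iff {k : ℕ} (p : MP) :
    @Membership.mem ((msig k).Pred) (Set ((msig k).Pred)) (Set.instMembership) intsM p ↔
      (p = MP.step ∨ p = MP.next ∨ p = MP.at') := Iff.rfl

-- memberships in progM
lemma mem_progM_step {k : ℕ} (i : Fin (k+1)) :
    (Fml.atom MP.step ![con i] : Fml (msig k)) ∈ progM k :=
  Or.inl (Or.inl (Or.inl ⟨i, rfl⟩))
lemma mem_progM_next {k : ℕ} (i : Fin k) :
    (Fml.atom MP.next ![con i.castSucc, con i.succ] : Fml (msig k)) ∈ progM k :=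
  Or.inl (Or.inl (Or.inr ⟨i, rfl⟩))
lemma mem_progM_sentII {k : ℕ} {F : Fml (msig k)} (h : F ∈ sentII k) : F ∈ progM k :=
  Or.inl (Or.inr h)
lemma mem_progM_cIIIa {k : ℕ} : (cIIIa : Fml (msig k)) ∈ progM k := Or.inr (by simp)
lemma mem_progM_cIIIb {k : ℕ} : (cIIIb : Fml (msig k)) ∈ progM k := Or.inr (by simp)
lemma mem_progM_cIV {k : ℕ} : (cIV : Fml (msig k)) ∈ progM k := Or.inr (by simp)
lemma mem_progM_cV {k : ℕ} : (cV : Fml (msig k)) ∈ progM k := Or.inr (by simp)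
lemma mem_progM_rVIfml {k : ℕ} : (rVIfml : Fml (msig k)) ∈ progM k := Or.inr (by simp)
lemma mem_progM_chVII {k : ℕ} : (chVII : Fml (msig k)) ∈ progM k := Or.inr (by simp)
lemma mem_progM_chVIII {k : ℕ} : (chVIII : Fml (msig k)) ∈ progM k := Or.inr (by simp)


lemma mem_Hset_IIIa {k : ℕ} :
    ((Fml.atom MP.at' ![vx, vy, vz]).imp typBody : Fml (msig k)) ∈ Hset k :=
  Or.inr (by simp [typBody])
lemma mem_Hset_IIIb {k : ℕ} :
    ((Fml.atom MP.move ![vx, vy, vz]).imp typBody : Fml (msig k)) ∈ Hset k :=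
  Or.inr (by simp [typBody])
lemma mem_Hset_IV {k : ℕ} :
    (((Fml.atom MP.at' ![vx, vy1, vz]).and (Fml.atom MP.at' ![vx, vy2, vz])).imp
      (.eq vy1 vy2) : Fml (msig k)) ∈ Hset k :=
  Or.inr (by simp)
lemma mem_Hset_V {k : ℕ} :
    (((Fml.atom MP.object ![vx]).and (Fml.atom MP.step ![vz])).imp
      (Fml.ex 1 (Fml.atom MP.at' ![vx, vy, vz])) : Fml (msig k)) ∈ Hset k :=
  Or.inr (by simp)

lemma satAll_progM_iff {k : ℕ} (I : Interp (msig k)) :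
    I.satAll (progM k) ↔ (I.satProg (progPi k) ∧ I.satAll (Hset k)) := by
  constructor
  · intro hsat
    refine ⟨?_, ?_⟩
    · intro R hR v
      simp only [progPi, List.mem_append, List.mem_map, List.mem_finRange,
        List.mem_cons, List.not_mem_nil, or_false] at hR
      rcases hR with (⟨i, _, rfl⟩ | ⟨i, _, rfl⟩) | rfl | rfl | rfl | rfl | rfl | rfl
      · exact fun _ => hsat _ (mem_progM_step i) v
      · exact fun _ => hsat _ (mem_progM_next i) v
      · exact hsat _ mem_progM_rVIfml v
      · simp only [Rule.fml, ruleVII', Fml.Sat, Fml.not]; tauto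
      · simp only [Rule.fml, ruleVIII', Fml.Sat, Fml.not]; tauto
      · simp only [Rule.fml, choiceO, Fml.Sat, Fml.not]; tauto
      · simp only [Rule.fml, choicePl, Fml.Sat, Fml.not]; tauto
      · simp only [Rule.fml, choiceMv, Fml.Sat, Fml.not]; tauto
    · intro F hF v
      rcases hF with h | hF
      · exact hsat _ (mem_progM_sentII h) v
      · simp only [Set.mem_insert_iff, Set.mem_singleton_iff] at hF
        rcases hF with rfl | rfl | rfl | rfl
        · have := hsat _ mem_progM_cIIIa v
          simp only [cIIIa, Fml.Sat, Fml.not, typBody] at this ⊢; tauto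
        · have := hsat _ mem_progM_cIIIb v
          simp only [cIIIb, Fml.Sat, Fml.not, typBody] at this ⊢; tauto
        · have := hsat _ mem_progM_cIV v
          simp only [cIV, Fml.Sat, Fml.not] at this ⊢; tauto
        · have := hsat _ mem_progM_cV v
          simp only [cV, Fml.Sat, Fml.not] at this ⊢; tauto
  · rintro ⟨hp, hH⟩ F hF v
    rcases hF with (hF | hF) | hF
    · rcases hF with ⟨i, rfl⟩ | ⟨i, rfl⟩
      · exact hp _ (mem_progPi_stepFact i) v (fun h => h)
      · exact hp _ (mem_progPi_nextFact i) v (fun h => h)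
    · exact hH _ (Or.inl hF) v
    · simp only [Set.mem_insert_iff, Set.mem_singleton_iff] at hF
      rcases hF with rfl | rfl | rfl | rfl | rfl | rfl | rfl
      · have := hH _ mem_Hset_IIIa v
        simp only [Fml.Sat] at this
        simp only [cIIIa, Fml.Sat, Fml.not, typBody] at this ⊢
        tauto
      · have := hH _ mem_Hset_IIIb v
        simp only [Fml.Sat] at this
        simp only [cIIIb, Fml.Sat, Fml.not, typBody] at this ⊢
        tauto
      · have := hH _ mem_Hset_IV v
        simp only [Fml.Sat] at this
        simp only [cIV, Fml.Sat, Fml.not] at this ⊢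
        tauto
      · have := hH _ mem_Hset_V v
        simp only [Fml.Sat] at this
        simp only [cV, Fml.Sat, Fml.not] at this ⊢
        tauto
      · exact hp _ mem_progPi_ruleVI v
      · simp only [chVII, Fml.Sat, Fml.not]; tauto
      · simp only [chVIII, Fml.Sat, Fml.not]; tauto
section MinTransfer
variable {k : ℕ} {I : Interp (msig k)}

lemma starPi_forces_obj
    (u' : GAtom (msig k) I.U → Prop)
    (hstar' : ∀ R ∈ progPi k, ∀ v : ℕ → I.U, R.fml.SatStar I (progPreds (progPi k)) u' v)
    (g : Fin ((msig k).prArity MP.object) → I.U) :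
    I.rel ⟨MP.object, g⟩ → u' ⟨MP.object, g⟩ := by
  have h := hstar' _ (mem_progPi_choiceO (k := k)) (fun _ => g ⟨0, Nat.one_pos⟩)
  have harg : (fun i : Fin ((msig k).prArity MP.object) =>
      Term.eval I (fun _ => g ⟨0, Nat.one_pos⟩) (![vx] i)) = g := by
    funext i
    obtain ⟨iv, hiv⟩ := i
    have hiv' : iv < 1 := hiv
    interval_cases iv
    · rfl
  simp only [Rule.fml, choiceO, Fml.SatStar, Fml.Sat, Fml.not, pp_mem] at h
  rw [harg] at h
  tauto

lemma starPi_forces_place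
    (u' : GAtom (msig k) I.U → Prop)
    (hstar' : ∀ R ∈ progPi k, ∀ v : ℕ → I.U, R.fml.SatStar I (progPreds (progPi k)) u' v)
    (g : Fin ((msig k).prArity MP.place) → I.U) :
    I.rel ⟨MP.place, g⟩ → u' ⟨MP.place, g⟩ := by
  have h := hstar' _ (mem_progPi_choicePl (k := k)) (fun _ => g ⟨0, Nat.one_pos⟩)
  have harg : (fun i : Fin ((msig k).prArity MP.place) =>
      Term.eval I (fun _ => g ⟨0, Nat.one_pos⟩) (![vy] i)) = g := by
    funext i
    obtain ⟨iv, hiv⟩ := i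
    have hiv' : iv < 1 := hiv
    interval_cases iv
    · rfl
  simp only [Rule.fml, choicePl, Fml.SatStar, Fml.Sat, Fml.not, pp_mem] at h
  rw [harg] at h
  tauto

lemma starPi_forces_move
    (u' : GAtom (msig k) I.U → Prop)
    (hstar' : ∀ R ∈ progPi k, ∀ v : ℕ → I.U, R.fml.SatStar I (progPreds (progPi k)) u' v)
    (g : Fin ((msig k).prArity MP.move) → I.U) :
    I.rel ⟨MP.move, g⟩ → u' ⟨MP.move, g⟩ := by
  have h := hstar' _ (mem_progPi_choiceMv (k := k))
    (fun n => if n = 0 then g ⟨0, Nat.succ_pos 2⟩ else if n = 1 then g ⟨1, Nat.succ_lt_succ (Nat.succ_pos 1)⟩ else g ⟨2, Nat.lt_succ_self 2⟩)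
  have harg : (fun i : Fin ((msig k).prArity MP.move) =>
      Term.eval I (fun n => if n = 0 then g ⟨0, Nat.succ_pos 2⟩ else if n = 1 then g ⟨1, Nat.succ_lt_succ (Nat.succ_pos 1)⟩
        else g ⟨2, Nat.lt_succ_self 2⟩) (![vx, vy, vz] i)) = g := by
    funext i
    obtain ⟨iv, hiv⟩ := i
    have hiv' : iv < 3 := hiv
    interval_cases iv <;> rfl
  simp only [Rule.fml, choiceMv, Fml.SatStar, Fml.Sat, Fml.not, pp_mem] at h
  rw [harg] at h
  tauto

lemma starPi_forces
    (u' : GAtom (msig k) I.U → Prop)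
    (hle' : ∀ A : GAtom (msig k) I.U, u' A → I.rel A)
    (hstar' : ∀ R ∈ progPi k, ∀ v : ℕ → I.U, R.fml.SatStar I (progPreds (progPi k)) u' v) :
    ∀ A : GAtom (msig k) I.U, A.1 ∉ intsM → (u' A ↔ I.rel A) := by
  rintro ⟨p, g⟩ hp
  cases p with
  | object => exact ⟨hle' _, starPi_forces_obj u' hstar' g⟩
  | place => exact ⟨hle' _, starPi_forces_place u' hstar' g⟩
  | move => exact ⟨hle' _, starPi_forces_move u' hstar' g⟩
  | step => exact absurd (Or.inl rfl) hp
  | next => exact absurd (Or.inr (Or.inl rfl)) hp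
  | at' => exact absurd (Or.inr (Or.inr rfl)) hp

end MinTransfer
section Transfer1
variable {k : ℕ} {I : Interp (msig k)}

set_option maxHeartbeats 2000000 in
lemma starPi_to_starM
    (u' : GAtom (msig k) I.U → Prop)
    (hsat : I.satAll (progM k))
    (hle' : ∀ A : GAtom (msig k) I.U, u' A → I.rel A)
    (hstar' : ∀ R ∈ progPi k, ∀ v : ℕ → I.U, R.fml.SatStar I (progPreds (progPi k)) u' v) :
    ∀ F ∈ progM k, ∀ v : ℕ → I.U, F.SatStar I intsM u' v := by
  have hleM : ∀ A : GAtom (msig k) I.U, A.1 ∈ intsM → u' A → I.rel A := fun A _ => hle' A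
  intro F hF v
  rcases hF with (hF | hF) | hF
  · rcases hF with ⟨i, rfl⟩ | ⟨i, rfl⟩
    · have h := hstar' _ (mem_progPi_stepFact i) v
      simp only [Rule.fml, stepFact, Fml.SatStar, Fml.Sat, Fml.verum, Fml.not, pp_mem] at h
      simp only [Fml.SatStar, mem_intsM_iff]
      tauto
    · have h := hstar' _ (mem_progPi_nextFact i) v
      simp only [Rule.fml, nextFact, Fml.SatStar, Fml.Sat, Fml.verum, Fml.not, pp_mem] at h
      simp only [Fml.SatStar, mem_intsM_iff]
      tauto
  · obtain ⟨i, j, h1, h2, rfl⟩ := hF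
    have h := hsat _ (mem_progM_sentII ⟨i, j, h1, h2, rfl⟩) v
    exact ⟨h, h⟩
  · simp only [Set.mem_insert_iff, Set.mem_singleton_iff] at hF
    rcases hF with rfl | rfl | rfl | rfl | rfl | rfl | rfl
    · have h := hsat _ mem_progM_cIIIa v
      exact ⟨fun hg => h (star_imp_sat I intsM u' hleM _ _ hg), h⟩
    · have h := hsat _ mem_progM_cIIIb v
      exact ⟨fun hg => h (star_imp_sat I intsM u' hleM _ _ hg), h⟩
    · have h := hsat _ mem_progM_cIV v
      exact ⟨fun hg => h (star_imp_sat I intsM u' hleM _ _ hg), h⟩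
    · have h := hsat _ mem_progM_cV v
      exact ⟨fun hg => h (star_imp_sat I intsM u' hleM _ _ hg), h⟩
    · have h6 := hstar' _ (mem_progPi_ruleVI (k := k)) v
      have hm := hstar' _ (mem_progPi_choiceMv (k := k)) v
      simp only [Rule.fml, ruleVI, choiceMv, Fml.SatStar, Fml.Sat, Fml.not, pp_mem] at h6 hm
      simp only [rVIfml, Fml.SatStar, Fml.Sat, mem_intsM_iff, reduceCtorEq,
        false_or, or_false, false_and, and_false, true_and, and_true, true_or, or_true,
        not_true, not_false_iff, true_iff, iff_true, not_true_eq_false, true_implies]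
      tauto
    · have h7 := hstar' _ (mem_progPi_ruleVII' (k := k)) v
      have hO := hstar' _ (mem_progPi_choiceO (k := k)) v
      have hP := hstar' _ (mem_progPi_choicePl (k := k)) v
      have hA := hle' ⟨MP.at', fun i : Fin ((msig k).prArity MP.at') =>
        Term.eval I v (![vx, vy, con 0] i)⟩
      simp only [Rule.fml, ruleVII', choiceO, choicePl, Fml.SatStar, Fml.Sat, Fml.not,
        pp_mem] at h7 hO hP
      simp only [chVII, Fml.SatStar, Fml.Sat, Fml.not, mem_intsM_iff, reduceCtorEq,
        false_or, or_false, false_and, and_false, true_and, and_true, true_or, or_true,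
        not_true, not_false_iff, true_iff, iff_true, not_true_eq_false, true_implies]
      tauto
    · have h8 := hstar' _ (mem_progPi_ruleVIII' (k := k)) v
      have hA := hle' ⟨MP.at', fun i : Fin ((msig k).prArity MP.at') =>
        Term.eval I v (![vx, vy, vu] i)⟩
      simp only [Rule.fml, ruleVIII', Fml.SatStar, Fml.Sat, Fml.not, pp_mem] at h8
      simp only [chVIII, Fml.SatStar, Fml.Sat, Fml.not, mem_intsM_iff, reduceCtorEq,
        false_or, or_false, false_and, and_false, true_and, and_true, true_or, or_true,
        not_true, not_false_iff, true_iff, iff_true, not_true_eq_false, true_implies]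
      tauto
end Transfer1
section Transfer2
variable {k : ℕ} {I : Interp (msig k)}

set_option maxHeartbeats 1000000 in
lemma starM_to_starPi
    (u u' : GAtom (msig k) I.U → Prop)
    (hsat : I.satAll (progM k))
    (hle : ∀ A : GAtom (msig k) I.U,
      (A.1 = MP.step ∨ A.1 = MP.next ∨ A.1 = MP.at') → u A → I.rel A)
    (hstar : ∀ F ∈ progM k, ∀ v : ℕ → I.U, F.SatStar I intsM u v)
    (hu'int : ∀ A : GAtom (msig k) I.U,
      (A.1 = MP.step ∨ A.1 = MP.next ∨ A.1 = MP.at') → (u' A ↔ u A))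
    (hu'ext : ∀ A : GAtom (msig k) I.U,
      (A.1 = MP.object ∨ A.1 = MP.place ∨ A.1 = MP.move) → (u' A ↔ I.rel A)) :
    ∀ R ∈ progPi k, ∀ v : ℕ → I.U, R.fml.SatStar I (progPreds (progPi k)) u' v := by
  have hProg : I.satProg (progPi k) := ((satAll_progM_iff I).mp hsat).1
  have hOr : ∀ g : Fin ((msig k).prArity MP.object) → I.U,
      u' ⟨MP.object, g⟩ ↔ I.rel ⟨MP.object, g⟩ := fun g => hu'ext _ (Or.inl rfl)
  have hPlr : ∀ g : Fin ((msig k).prArity MP.place) → I.U,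
      u' ⟨MP.place, g⟩ ↔ I.rel ⟨MP.place, g⟩ := fun g => hu'ext _ (Or.inr (Or.inl rfl))
  have hMvr : ∀ g : Fin ((msig k).prArity MP.move) → I.U,
      u' ⟨MP.move, g⟩ ↔ I.rel ⟨MP.move, g⟩ := fun g => hu'ext _ (Or.inr (Or.inr rfl))
  have hSr : ∀ g : Fin ((msig k).prArity MP.step) → I.U,
      u' ⟨MP.step, g⟩ ↔ u ⟨MP.step, g⟩ := fun g => hu'int _ (Or.inl rfl)
  have hNr : ∀ g : Fin ((msig k).prArity MP.next) → I.U,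
      u' ⟨MP.next, g⟩ ↔ u ⟨MP.next, g⟩ := fun g => hu'int _ (Or.inr (Or.inl rfl))
  have hAr : ∀ g : Fin ((msig k).prArity MP.at') → I.U,
      u' ⟨MP.at', g⟩ ↔ u ⟨MP.at', g⟩ := fun g => hu'int _ (Or.inr (Or.inr rfl))
  intro R hR v
  simp only [progPi, List.mem_append, List.mem_map, List.mem_finRange,
    List.mem_cons, List.not_mem_nil, or_false] at hR
  rcases hR with (⟨i, _, rfl⟩ | ⟨i, _, rfl⟩) | rfl | rfl | rfl | rfl | rfl | rfl
  · have h := hstar _ (mem_progM_step i) v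
    have h2 := hProg _ (mem_progPi_stepFact i) v
    simp only [Fml.SatStar, mem_intsM_iff, reduceCtorEq, or_false, false_or, true_and,
      false_and, and_true, and_false, not_false_iff, not_true] at h
    simp only [Rule.fml, stepFact, Fml.Sat, Fml.verum, Fml.not] at h2
    simp only [Rule.fml, stepFact, Fml.SatStar, Fml.Sat, Fml.verum, Fml.not, pp_mem,
      hSr, true_and, not_true]
    tauto
  · have h := hstar _ (mem_progM_next i) v
    have h2 := hProg _ (mem_progPi_nextFact i) v
    simp only [Fml.SatStar, mem_intsM_iff, reduceCtorEq, or_false, false_or, true_and,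
      false_and, and_true, and_false, not_false_iff, not_true] at h
    simp only [Rule.fml, nextFact, Fml.Sat, Fml.verum, Fml.not] at h2
    simp only [Rule.fml, nextFact, Fml.SatStar, Fml.Sat, Fml.verum, Fml.not, pp_mem,
      hNr, true_and, not_true]
    tauto
  · have h := hstar _ mem_progM_rVIfml v
    simp only [rVIfml, Fml.SatStar, Fml.Sat, mem_intsM_iff, reduceCtorEq, or_false,
      false_or, true_and, false_and, and_true, and_false, not_false_iff, not_true] at h
    simp only [Rule.fml, ruleVI, Fml.SatStar, Fml.Sat, Fml.not, pp_mem, hMvr, hNr, hAr,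
      true_and]
    tauto
  · have h := hstar _ mem_progM_chVII v
    have hA := hle ⟨MP.at', fun i : Fin ((msig k).prArity MP.at') =>
      Term.eval I v (![vx, vy, con 0] i)⟩ (Or.inr (Or.inr rfl))
    simp only [chVII, Fml.SatStar, Fml.Sat, Fml.not, mem_intsM_iff, reduceCtorEq, or_false,
      false_or, true_and, false_and, and_true, and_false, not_false_iff, not_true] at h
    simp only [Rule.fml, ruleVII', Fml.SatStar, Fml.Sat, Fml.not, pp_mem, hOr, hPlr, hAr,
      true_and]
    tauto
  · have h := hstar _ mem_progM_chVIII v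
    have hA := hle ⟨MP.at', fun i : Fin ((msig k).prArity MP.at') =>
      Term.eval I v (![vx, vy, vu] i)⟩ (Or.inr (Or.inr rfl))
    simp only [chVIII, Fml.SatStar, Fml.Sat, Fml.not, mem_intsM_iff, reduceCtorEq, or_false,
      false_or, true_and, false_and, and_true, and_false, not_false_iff, not_true] at h
    simp only [Rule.fml, ruleVIII', Fml.SatStar, Fml.Sat, Fml.not, pp_mem, hNr, hAr,
      true_and]
    tauto
  · simp only [Rule.fml, choiceO, Fml.SatStar, Fml.Sat, Fml.not, pp_mem, hOr, true_and]
    tauto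
  · simp only [Rule.fml, choicePl, Fml.SatStar, Fml.Sat, Fml.not, pp_mem, hPlr, true_and]
    tauto
  · simp only [Rule.fml, choiceMv, Fml.SatStar, Fml.Sat, Fml.not, pp_mem, hMvr, true_and]
    tauto

end Transfer2
/-- SM_p[M] is equivalent to SM[Pi] ∧ H. -/
theorem smM_equiv_smPi_and_H (k : ℕ) (I : Interp (msig k)) :
    I.satSMSet intsM (progM k) ↔
      (I.satSM (progPreds (progPi k)) (progPi k) ∧ I.satAll (Hset k)) := by
  constructor
  · rintro ⟨hsat, hmin⟩
    obtain ⟨hProg, hH⟩ := (satAll_progM_iff I).mp hsat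
    refine ⟨⟨hProg, ?_⟩, hH⟩
    rintro ⟨u', hlt', hstar'⟩
    have hle' : ∀ A : GAtom (msig k) I.U, u' A → I.rel A := fun A => hlt'.1 A (pp_mem _)
    apply hmin
    refine ⟨u', ⟨fun A _ => hle' A, ?_⟩, starPi_to_starM u' hsat hle' hstar'⟩
    intro hEq
    apply hlt'.2
    intro A _
    by_cases hA : A.1 ∈ intsM
    · exact hEq A hA
    · exact starPi_forces u' hle' hstar' A hA
  · rintro ⟨⟨hProg, hminPi⟩, hH⟩
    have hsat : I.satAll (progM k) := (satAll_progM_iff I).mpr ⟨hProg, hH⟩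
    refine ⟨hsat, ?_⟩
    rintro ⟨u, hlt, hstar⟩
    apply hminPi
    refine ⟨fun A => if A.1 ∈ intsM then u A else I.rel A, ⟨?_, ?_⟩, ?_⟩
    · intro A _ h
      by_cases hA : A.1 ∈ intsM
      · have h' : (if A.1 ∈ intsM then u A else I.rel A) := h
        exact hlt.1 A hA (by rwa [if_pos hA] at h')
      · have h' : (if A.1 ∈ intsM then u A else I.rel A) := h
        rwa [if_neg hA] at h'
    · intro hEq
      apply hlt.2
      intro A hA
      have h : (if A.1 ∈ intsM then u A else I.rel A) ↔ I.rel A := hEq A (pp_mem _)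
      simp [hA] at h
      exact h hA
    · refine starM_to_starPi u _ hsat (fun A h => hlt.1 A h) hstar ?_ ?_
      · intro A h
        exact iff_of_eq (if_pos (show A.1 ∈ intsM from h))
      · intro A h
        refine iff_of_eq (if_neg ?_)
        rcases h with h | h | h <;> rw [h] <;> rintro (h' | h' | h') <;> cases h'
end LT
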